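/- For every ζ > 0, define Δ(ζ, x) = Im(φ_x(iζ)) − ζ. Then ∫_{−∞}^{∞} Δ(ζ, x) dx = π/2. -/

import Mathlib

noncomputable def upperSqrt (w : ℂ) : ℂ :=
  if 0 < (w ^ (1/2 : ℂ)).im then w ^ (1/2 : ℂ) else -(w ^ (1/2 : ℂ))

noncomputable def slitMap (x : ℝ) (z : ℂ) : ℂ :=
  (x : ℂ) + upperSqrt ((z - (x : ℂ)) ^ 2 - 1)

open MeasureTheory

/-!
Write `√((iζ - x) ^ 2 - 1) = u + i v` with `v > 0`. The height `v = slitHeight ζ x` is even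
in `x`, tends to `ζ` at infinity and satisfies `x ^ 2 (v ^ 2 - ζ ^ 2) = v ^ 2 (1 + ζ ^ 2 - v ^ 2)`.
Integrating `v - ζ` by parts over `(0, ∞)` and substituting `t = v ^ 2 - ζ ^ 2`, which runs
from `1` down to `0`, gives `∫₀^∞ (v - ζ) dx = ½ ∫₀¹ √((1 - t) / t) dt = π / 4`. With the
primitive `arcsin √t + √(t - t ^ 2)` of `√((1 - t) / t)` this becomes a single application of
the fundamental theorem of calculus.
-/

open Real Set Filter Topology

lemma upperSqrt_sq (w : ℂ) : upperSqrt w ^ 2 = w := by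
  unfold upperSqrt
  split_ifs <;> simp

lemma upperSqrt_im_nonneg (w : ℂ) : 0 ≤ (upperSqrt w).im := by
  unfold upperSqrt
  split_ifs with h
  · exact h.le
  · simpa using not_lt.mp h

lemma upperSqrt_im (w : ℂ) : (upperSqrt w).im = √((‖w‖ - w.re) / 2) := by
  set c := upperSqrt w
  have hre : w.re = c.re ^ 2 - c.im ^ 2 := by
    rw [← upperSqrt_sq w, sq c, Complex.mul_re]; ring
  have hnorm : ‖w‖ = c.re ^ 2 + c.im ^ 2 := by
    rw [← upperSqrt_sq w, norm_pow, Complex.sq_norm, Complex.normSq_apply]; ring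
  rw [hre, hnorm, show (c.re ^ 2 + c.im ^ 2 - (c.re ^ 2 - c.im ^ 2)) / 2 = c.im ^ 2 by ring,
    sqrt_sq (upperSqrt_im_nonneg w)]

noncomputable def slitHeight (ζ x : ℝ) : ℝ :=
  √((√((x ^ 2 - ζ ^ 2 - 1) ^ 2 + (2 * ζ * x) ^ 2) - (x ^ 2 - ζ ^ 2 - 1)) / 2)

lemma slitMap_I_mul_im (ζ x : ℝ) : (slitMap x (Complex.I * ζ)).im = slitHeight ζ x := by
  set w := (Complex.I * ζ - x) ^ 2 - 1
  have hre : w.re = x ^ 2 - ζ ^ 2 - 1 := by simp [w, sq, Complex.mul_re]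
  have him : w.im = -(2 * ζ * x) := by simp [w, sq, Complex.mul_im]; ring
  have hnorm : ‖w‖ = √((x ^ 2 - ζ ^ 2 - 1) ^ 2 + (2 * ζ * x) ^ 2) := by
    rw [Complex.norm_def, Complex.normSq_apply, hre, him]; ring_nf
  simp only [slitMap, Complex.add_im, Complex.ofReal_im, zero_add]
  rw [upperSqrt_im, hnorm, hre, slitHeight]

lemma slitHeight_abs (ζ x : ℝ) : slitHeight ζ |x| = slitHeight ζ x := by
  simp only [slitHeight, mul_pow, sq_abs]

lemma slitHeight_sq (ζ x : ℝ) : slitHeight ζ x ^ 2 =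
    (√((x ^ 2 - ζ ^ 2 - 1) ^ 2 + (2 * ζ * x) ^ 2) - (x ^ 2 - ζ ^ 2 - 1)) / 2 := by
  refine sq_sqrt (div_nonneg (sub_nonneg.mpr ?_) zero_le_two)
  exact (le_abs_self _).trans (abs_le_sqrt (le_add_of_nonneg_right (sq_nonneg _)))

lemma sq_mul_slitHeight_sq_sub (ζ x : ℝ) :
    x ^ 2 * (slitHeight ζ x ^ 2 - ζ ^ 2) =
      slitHeight ζ x ^ 2 * (1 + ζ ^ 2 - slitHeight ζ x ^ 2) := by
  have hR := sq_sqrt (add_nonneg (sq_nonneg (x ^ 2 - ζ ^ 2 - 1)) (sq_nonneg (2 * ζ * x)))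
  rw [slitHeight_sq]
  linear_combination hR / 4

lemma sq_lt_slitHeight_sq {ζ : ℝ} (hζ : ζ ≠ 0) (x : ℝ) : ζ ^ 2 < slitHeight ζ x ^ 2 := by
  have : x ^ 2 - ζ ^ 2 - 1 + 2 * ζ ^ 2 < √((x ^ 2 - ζ ^ 2 - 1) ^ 2 + (2 * ζ * x) ^ 2) := by
    apply lt_sqrt_of_sq_lt
    have : 0 < ζ ^ 2 := by positivity
    nlinarith
  rw [slitHeight_sq]
  linarith

lemma lt_slitHeight {ζ : ℝ} (hζ : 0 < ζ) (x : ℝ) : ζ < slitHeight ζ x :=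
  lt_of_pow_lt_pow_left₀ 2 (sqrt_nonneg _) (sq_lt_slitHeight_sq hζ.ne' x)

lemma slitHeight_sq_lt (ζ : ℝ) {x : ℝ} (hx : x ≠ 0) : slitHeight ζ x ^ 2 < 1 + ζ ^ 2 := by
  have : √((x ^ 2 - ζ ^ 2 - 1) ^ 2 + (2 * ζ * x) ^ 2) < x ^ 2 + ζ ^ 2 + 1 := by
    rw [sqrt_lt' (by positivity)]
    have : 0 < x ^ 2 := by positivity
    nlinarith
  rw [slitHeight_sq]
  linarith

lemma slitHeight_zero (ζ : ℝ) : slitHeight ζ 0 = √(1 + ζ ^ 2) := by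
  rw [slitHeight, show ((0:ℝ) ^ 2 - ζ ^ 2 - 1) ^ 2 + (2 * ζ * 0) ^ 2 = (1 + ζ ^ 2) ^ 2 by ring,
    sqrt_sq (by positivity)]
  ring_nf

lemma differentiable_slitHeight {ζ : ℝ} (hζ : ζ ≠ 0) : Differentiable ℝ (slitHeight ζ) := by
  intro x
  have hR : (x ^ 2 - ζ ^ 2 - 1) ^ 2 + (2 * ζ * x) ^ 2 ≠ 0 := by
    rw [show (x ^ 2 - ζ ^ 2 - 1) ^ 2 + (2 * ζ * x) ^ 2 = (x ^ 2 + ζ ^ 2 - 1) ^ 2 + 4 * ζ ^ 2 by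
      ring]
    positivity
  have hv : (√((x ^ 2 - ζ ^ 2 - 1) ^ 2 + (2 * ζ * x) ^ 2) - (x ^ 2 - ζ ^ 2 - 1)) / 2 ≠ 0 := by
    rw [← slitHeight_sq]
    exact ((sq_pos_of_ne_zero hζ).trans (sq_lt_slitHeight_sq hζ x)).ne'
  unfold slitHeight
  fun_prop (disch := assumption)

noncomputable def arcsinSqrtAddSqrt (t : ℝ) : ℝ := arcsin √t + √(t - t ^ 2)

lemma hasDerivAt_arcsinSqrtAddSqrt {t : ℝ} (h0 : 0 < t) (h1 : t < 1) :
    HasDerivAt arcsinSqrtAddSqrt (√((1 - t) / t)) t := by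
  have hs : √t < 1 := (sqrt_lt' one_pos).2 (by simpa using h1)
  have harcsin := (hasDerivAt_arcsin (by linarith [sqrt_nonneg t]) hs.ne).comp t
    (hasDerivAt_sqrt h0.ne')
  have hpoly : HasDerivAt (fun y : ℝ => y - y ^ 2) (1 - 2 * t) t :=
    ((hasDerivAt_id' t).sub (hasDerivAt_pow 2 t)).congr_deriv (by ring)
  have hroot := hpoly.sqrt (by nlinarith)
  refine (harcsin.add hroot).congr_deriv ?_
  have ha : 0 < √t := sqrt_pos.2 h0
  have hb : 0 < √(1 - t) := sqrt_pos.2 (by linarith)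
  have ha2 := sq_sqrt h0.le
  have hb2 := sq_sqrt (by linarith : (0 : ℝ) ≤ 1 - t)
  rw [sqrt_div' _ h0.le, show t - t ^ 2 = t * (1 - t) by ring, sqrt_mul h0.le, ha2]
  field_simp
  linear_combination (-2) * hb2

lemma continuous_arcsinSqrtAddSqrt : Continuous arcsinSqrtAddSqrt := by
  unfold arcsinSqrtAddSqrt; fun_prop

lemma arcsinSqrtAddSqrt_zero : arcsinSqrtAddSqrt 0 = 0 := by
  simp [arcsinSqrtAddSqrt]

lemma arcsinSqrtAddSqrt_one : arcsinSqrtAddSqrt 1 = π / 2 := by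
  simp [arcsinSqrtAddSqrt]

noncomputable def slitHeightPrimitive (ζ x : ℝ) : ℝ :=
  (slitHeight ζ x - ζ) * x - arcsinSqrtAddSqrt (slitHeight ζ x ^ 2 - ζ ^ 2) / 2

lemma hasDerivAt_slitHeightPrimitive {ζ : ℝ} (hζ : 0 < ζ) {x : ℝ} (hx : 0 < x) :
    HasDerivAt (slitHeightPrimitive ζ) (slitHeight ζ x - ζ) x := by
  set v := slitHeight ζ x
  set t := v ^ 2 - ζ ^ 2
  have hv := (differentiable_slitHeight hζ.ne' x).hasDerivAt
  have ht0 : 0 < t := sub_pos.2 (sq_lt_slitHeight_sq hζ.ne' x)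
  have ht1 : t < 1 := by linarith [slitHeight_sq_lt ζ hx.ne']
  have hx_eq : x = v * √((1 - t) / t) := by
    have hvpos : 0 < v := hζ.trans (lt_slitHeight hζ x)
    rw [← sqrt_sq hx.le, ← sqrt_sq hvpos.le, ← sqrt_mul (sq_nonneg _)]
    congr 1
    field_simp
    linear_combination sq_mul_slitHeight_sq_sub ζ x
  have := ((hv.sub_const ζ).mul (hasDerivAt_id' x)).sub
    (((hasDerivAt_arcsinSqrtAddSqrt ht0 ht1).comp x ((hv.pow 2).sub_const (ζ ^ 2))).div_const 2)
  refine this.congr_deriv ?_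
  -- the derivative of `slitHeight` is never computed: `hx_eq` makes its two occurrences cancel
  linear_combination deriv (slitHeight ζ) x * hx_eq

lemma continuous_slitHeightPrimitive {ζ : ℝ} (hζ : ζ ≠ 0) :
    Continuous (slitHeightPrimitive ζ) := by
  have := (differentiable_slitHeight hζ).continuous
  have := continuous_arcsinSqrtAddSqrt
  unfold slitHeightPrimitive
  fun_prop

lemma slitHeightPrimitive_zero (ζ : ℝ) : slitHeightPrimitive ζ 0 = -(π / 4) := by
  rw [slitHeightPrimitive, slitHeight_zero, sq_sqrt (by positivity), add_sub_cancel_right,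
    arcsinSqrtAddSqrt_one]
  ring

lemma slitHeight_sub_mul_le {ζ : ℝ} (hζ : 0 < ζ) {x : ℝ} (hx : x ≠ 0) :
    (slitHeight ζ x - ζ) * (2 * ζ * x ^ 2) ≤ 1 + ζ ^ 2 := by
  have hlt := lt_slitHeight hζ x
  have hsq_lt := slitHeight_sq_lt ζ hx
  have hsq_gt := sq_lt_slitHeight_sq hζ.ne' x
  have ht : (slitHeight ζ x - ζ) * (2 * ζ) ≤ slitHeight ζ x ^ 2 - ζ ^ 2 := by nlinarith
  have hxt : x ^ 2 * (slitHeight ζ x ^ 2 - ζ ^ 2) ≤ 1 + ζ ^ 2 := by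
    rw [sq_mul_slitHeight_sq_sub]; nlinarith
  calc (slitHeight ζ x - ζ) * (2 * ζ * x ^ 2)
        = x ^ 2 * ((slitHeight ζ x - ζ) * (2 * ζ)) := by ring
    _ ≤ x ^ 2 * (slitHeight ζ x ^ 2 - ζ ^ 2) := by gcongr
    _ ≤ 1 + ζ ^ 2 := hxt

lemma tendsto_slitHeight_sub_mul_atTop {ζ : ℝ} (hζ : 0 < ζ) :
    Tendsto (fun x => (slitHeight ζ x - ζ) * x) atTop (𝓝 0) := by
  have hbound : Tendsto (fun x : ℝ => (1 + ζ ^ 2) / (2 * ζ) * x⁻¹) atTop (𝓝 0) := by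
    have := tendsto_inv_atTop_zero.const_mul ((1 + ζ ^ 2) / (2 * ζ))
    rwa [mul_zero] at this
  refine tendsto_of_tendsto_of_tendsto_of_le_of_le' tendsto_const_nhds hbound ?_ ?_
  · filter_upwards [eventually_ge_atTop 0] with x hx
    exact mul_nonneg (sub_nonneg.2 (lt_slitHeight hζ x).le) hx
  · filter_upwards [eventually_gt_atTop 0] with x hx
    rw [← div_eq_mul_inv, div_div, le_div_iff₀ (by positivity)]
    linarith [slitHeight_sub_mul_le hζ hx.ne']

lemma tendsto_slitHeight_atTop {ζ : ℝ} (hζ : 0 < ζ) :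
    Tendsto (slitHeight ζ) atTop (𝓝 ζ) := by
  have h := ((tendsto_slitHeight_sub_mul_atTop hζ).mul tendsto_inv_atTop_zero).add_const ζ
  rw [zero_mul, zero_add] at h
  refine h.congr' ?_
  filter_upwards [eventually_gt_atTop 0] with x hx
  field_simp
  ring

lemma tendsto_slitHeightPrimitive_atTop {ζ : ℝ} (hζ : 0 < ζ) :
    Tendsto (slitHeightPrimitive ζ) atTop (𝓝 0) := by
  have ht : Tendsto (fun x => slitHeight ζ x ^ 2 - ζ ^ 2) atTop (𝓝 0) := by
    have := ((tendsto_slitHeight_atTop hζ).pow 2).sub_const (ζ ^ 2)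
    rwa [sub_self] at this
  have h := (tendsto_slitHeight_sub_mul_atTop hζ).sub
    (((continuous_arcsinSqrtAddSqrt.tendsto 0).comp ht).div_const 2)
  rwa [arcsinSqrtAddSqrt_zero, zero_div, sub_zero] at h

lemma integral_Ioi_slitHeight_sub {ζ : ℝ} (hζ : 0 < ζ) :
    ∫ x in Ioi 0, slitHeight ζ x - ζ = π / 4 := by
  rw [integral_Ioi_of_hasDerivAt_of_nonneg
    (continuous_slitHeightPrimitive hζ.ne').continuousWithinAt
    (fun x hx => hasDerivAt_slitHeightPrimitive hζ hx)
    (fun x _ => sub_nonneg.2 (lt_slitHeight hζ x).le) (tendsto_slitHeightPrimitive_atTop hζ),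
    slitHeightPrimitive_zero]
  ring

theorem slitMap_integral_vertical_growth (ζ : ℝ) (hζ : 0 < ζ) :
    (∫ x : ℝ, ((slitMap x (Complex.I * ζ)).im - ζ)) = Real.pi / 2 := by
  calc ∫ x : ℝ, (slitMap x (Complex.I * ζ)).im - ζ = ∫ x : ℝ, slitHeight ζ |x| - ζ := by
        simp only [slitMap_I_mul_im, slitHeight_abs]
    _ = 2 * ∫ x in Ioi 0, slitHeight ζ x - ζ :=
        integral_comp_abs (f := fun x => slitHeight ζ x - ζ)
    _ = π / 2 := by rw [integral_Ioi_slitHeight_sub hζ]; ring
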